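/- Galois's theorem on purely periodic continued fractions: an irrational real number x has a purely periodic regular continued fraction expansion (i.e. there exists k ≥ 1 with aₙ₊ₖ = aₙ for all n ≥ 0) if and only if x is a reduced quadratic irrational, meaning x is a quadratic irrational with x > 1 whose Galois conjugate x′ (the other root of its minimal quadratic polynomial over ℚ) satisfies −1 < x′ < 0. -/

import Mathlib

/-- The Gauss map `T : [0,1) → [0,1)`, `T 0 = 0` and `T x = 1/x - ⌊1/x⌋` for `x ≠ 0`. -/
noncomputable def gaussMap : ℝ → ℝ := fun x => if x = 0 then 0 else Int.fract (1 / x)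

/-- The partial quotients of the regular continued fraction expansion
`x = [a₀; a₁, a₂, …]`: `a₀ = ⌊x⌋` and `aₙ₊₁ = ⌊1 / Tⁿ({x})⌋` where `T` is the Gauss map. -/
noncomputable def cfA (x : ℝ) : ℕ → ℤ
  | 0 => ⌊x⌋
  | n + 1 => ⌊1 / gaussMap^[n] (Int.fract x)⌋

/-!
Write `xₙ₊₁ = 1 / {xₙ}`, `x₀ = x`, for the complete quotients. An irrational number is the limit
of its convergents, so it is determined by its partial quotients, and pure periodicity means
`x_k = x` for some `k ≥ 1`. Then `x = (p x + p') / (q x + q')` with integers `p, p', q ≥ 1`,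
`q' ≥ 0` and `p' + q' < p + q`, and the signs of `q X² + (q' - p) X - p'` at `0` and `-1` put the
conjugate in `(-1, 0)`. Conversely, if `x` is reduced then so is every `xₙ`, with the same
discriminant `D`. Reduced numbers of discriminant `D` are finitely many, and `xₙ₊₁` determines
`xₙ`: the conjugate of `xₙ₊₁` is `1 / (x'ₙ - ⌊xₙ⌋)`, and `x'ₙ ∈ (-1, 0)` recovers `⌊xₙ⌋` from it.
So the shift permutes a finite set containing `x`, which is therefore periodic.
-/

open Function

-- Sends the complete quotient `xₙ` of `x` to `xₙ₊₁`.
noncomputable def cfShift (y : ℝ) : ℝ := (Int.fract y)⁻¹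

theorem floor_add_inv_cfShift (y : ℝ) : ⌊y⌋ + (cfShift y)⁻¹ = y := by
  rw [cfShift, inv_inv, Int.floor_add_fract]

theorem one_lt_cfShift {y : ℝ} (hy : Int.fract y ≠ 0) : 1 < cfShift y :=
  (one_lt_inv₀ ((Int.fract_nonneg y).lt_of_ne' hy)).2 (Int.fract_lt_one y)

theorem Irrational.fract_ne_zero {y : ℝ} (hy : Irrational y) : Int.fract y ≠ 0 :=
  (hy.sub_intCast ⌊y⌋).ne_zero

theorem irrational_cfShift {y : ℝ} (hy : Irrational y) : Irrational (cfShift y) :=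
  (hy.sub_intCast ⌊y⌋).inv

theorem irrational_iterate_cfShift {y : ℝ} (hy : Irrational y) (n : ℕ) :
    Irrational (cfShift^[n] y) := by
  induction n with
  | zero => exact hy
  | succ n ih => rw [iterate_succ_apply']; exact irrational_cfShift ih

theorem one_lt_iterate_cfShift {x : ℝ} (hx : Irrational x) (n : ℕ) : 1 < cfShift^[n + 1] x := by
  rw [iterate_succ_apply']
  exact one_lt_cfShift (irrational_iterate_cfShift hx n).fract_ne_zero

theorem gaussMap_iterate_fract {x : ℝ} (hx : Irrational x) (n : ℕ) :
    gaussMap^[n] (Int.fract x) = Int.fract (cfShift^[n] x) := by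
  induction n with
  | zero => rfl
  | succ n ih =>
    rw [iterate_succ_apply', ih, iterate_succ_apply', gaussMap, if_neg
      (irrational_iterate_cfShift hx n).fract_ne_zero, one_div, cfShift]

theorem cfA_eq_floor_iterate_cfShift {x : ℝ} (hx : Irrational x) (n : ℕ) :
    cfA x n = ⌊cfShift^[n] x⌋ := by
  cases n with
  | zero => rfl
  | succ n => rw [cfA, gaussMap_iterate_fract hx, iterate_succ_apply', one_div, cfShift]

theorem cfA_add {x : ℝ} (hx : Irrational x) (n k : ℕ) :
    cfA x (n + k) = cfA (cfShift^[k] x) n := by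
  rw [cfA_eq_floor_iterate_cfShift hx,
    cfA_eq_floor_iterate_cfShift (irrational_iterate_cfShift hx k), iterate_add_apply]

namespace GenContFract

theorem of_injective : Injective (GenContFract.of : ℝ → GenContFract ℝ) := fun x y h =>
  tendsto_nhds_unique (of_convergence x) (by rw [h]; exact of_convergence y)

theorem of_s_get?_eq_cfA {x : ℝ} (hx : Irrational x) (n : ℕ) :
    (GenContFract.of x).s.get? n = some ⟨1, (cfA x (n + 1) : ℝ)⟩ := by
  induction n generalizing x with
  | zero =>
    rw [cfA_eq_floor_iterate_cfShift hx, iterate_one]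
    exact of_s_head hx.fract_ne_zero
  | succ n ih =>
    rw [of_s_succ, ← cfShift, ih (irrational_cfShift hx), cfA_add hx, iterate_one]

end GenContFract

theorem cfA_injOn_irrational : Set.InjOn cfA {x : ℝ | Irrational x} := by
  intro x hx y hy h
  apply GenContFract.of_injective
  have hs : (GenContFract.of x).s = (GenContFract.of y).s := Stream'.Seq.ext fun n => by
    rw [GenContFract.of_s_get?_eq_cfA hx, GenContFract.of_s_get?_eq_cfA hy, h]
  change GenContFract.mk (GenContFract.of x).h (GenContFract.of x).s =
    GenContFract.mk (GenContFract.of y).h (GenContFract.of y).s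
  rw [hs, GenContFract.of_h_eq_floor, GenContFract.of_h_eq_floor]
  exact congrArg (fun a : ℤ => GenContFract.mk (a : ℝ) _) (congrFun h 0)

theorem cfA_purelyPeriodic_iff_mem_periodicPts {x : ℝ} (hx : Irrational x) :
    (∃ k : ℕ, 1 ≤ k ∧ ∀ n : ℕ, cfA x (n + k) = cfA x n) ↔ x ∈ periodicPts cfShift := by
  constructor
  · rintro ⟨k, hk, hper⟩
    exact mk_mem_periodicPts hk <| cfA_injOn_irrational (irrational_iterate_cfShift hx k) hx <|
      funext fun n => (cfA_add hx n k).symm.trans (hper n)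
  · rintro ⟨k, hk, hper⟩
    exact ⟨k, hk, fun n => by rw [cfA_add hx, hper.eq]⟩

-- `y` and `y'` are the roots of `A X² + B X + C`, written through Vieta's formulas.
def IsReducedPair (D : ℤ) (y y' : ℝ) : Prop :=
  1 < y ∧ -1 < y' ∧ y' < 0 ∧ ∃ A B C : ℤ, 0 < A ∧ B ^ 2 - 4 * A * C = D ∧
    (B : ℝ) = -A * (y + y') ∧ (C : ℝ) = A * (y * y')

theorem isReducedPair_of_root {A B C : ℤ} {x : ℝ} (hA : 0 < A)
    (hroot : (A : ℝ) * x ^ 2 + B * x + C = 0) (hx : 1 < x)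
    (hneg : -1 < -(B : ℝ) / A - x) (hpos : -(B : ℝ) / A - x < 0) :
    IsReducedPair (B ^ 2 - 4 * A * C) x (-(B : ℝ) / A - x) := by
  have hA' : (A : ℝ) ≠ 0 := by positivity
  refine ⟨hx, hneg, hpos, A, B, C, hA, rfl, by field_simp; ring, ?_⟩
  field_simp
  linear_combination hroot

theorem exists_isReducedPair_iff {x : ℝ} :
    (∃ D x', IsReducedPair D x x') ↔
      (1 < x ∧ ∃ A B C : ℤ, A ≠ 0 ∧ (A : ℝ) * x ^ 2 + (B : ℝ) * x + (C : ℝ) = 0 ∧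
        -1 < -(B : ℝ) / (A : ℝ) - x ∧ -(B : ℝ) / (A : ℝ) - x < 0) := by
  constructor
  · rintro ⟨D, x', hx, hneg, hpos, A, B, C, hA, -, hB, hC⟩
    have hconj : -(B : ℝ) / A - x = x' := by
      rw [hB]
      field_simp
      ring
    refine ⟨hx, A, B, C, hA.ne', by rw [hB, hC]; ring, ?_⟩
    rw [hconj]
    exact ⟨hneg, hpos⟩
  · rintro ⟨hx, A, B, C, hA, hroot, hneg, hpos⟩
    rcases hA.lt_or_gt with hA | hA
    · have hconj : -((-B : ℤ) : ℝ) / ((-A : ℤ) : ℝ) = -(B : ℝ) / A := by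
        push_cast
        exact neg_div_neg_eq _ _
      refine ⟨_, _, isReducedPair_of_root (C := -C) (by omega) ?_ hx
        (hconj ▸ hneg) (hconj ▸ hpos)⟩
      push_cast
      linear_combination -hroot
    · exact ⟨_, _, isReducedPair_of_root hA hroot hx hneg hpos⟩

theorem isReducedPair_of_signs {A B C : ℤ} {x : ℝ} (hA : 0 < A)
    (hroot : (A : ℝ) * x ^ 2 + B * x + C = 0) (hx : 1 < x) (hC : C < 0) (hABC : 0 < A - B + C) :
    IsReducedPair (B ^ 2 - 4 * A * C) x (-(B : ℝ) / A - x) := by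
  have hA' : (0 : ℝ) < A := by exact_mod_cast hA
  set x' := -(B : ℝ) / A - x
  -- evaluate `A (X - x) (X - x')` at `X = 0` and `X = -1`
  have hC' : (C : ℝ) = A * x * x' := by
    simp only [x']
    field_simp
    linear_combination hroot
  have hABC' : ((A - B + C : ℤ) : ℝ) = A * (1 + x) * (1 + x') := by
    push_cast
    simp only [x']
    field_simp
    linear_combination hroot
  have hxx' : A * x * x' < 0 := by rw [← hC']; exact_mod_cast hC
  have h1x' : 0 < A * (1 + x) * (1 + x') := by rw [← hABC']; exact_mod_cast hABC
  refine isReducedPair_of_root hA hroot hx ?_ (neg_of_mul_neg_right hxx' (by positivity))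
  linarith [pos_of_mul_pos_right h1x' (by positivity)]

theorem exists_mobius_iterate_cfShift {x : ℝ} (hx : Irrational x) (hx1 : 1 ≤ x) (n : ℕ) :
    ∃ p p' q q' : ℤ, 1 ≤ p ∧ 1 ≤ p' ∧ 1 ≤ q ∧ 0 ≤ q' ∧ p' + q' < p + q ∧
      x * (q * cfShift^[n + 1] x + q') = p * cfShift^[n + 1] x + p' := by
  induction n with
  | zero =>
    have hw : cfShift x ≠ 0 := (zero_lt_one.trans (one_lt_iterate_cfShift hx 0)).ne'
    have ha : 1 ≤ ⌊x⌋ := Int.le_floor.2 (by exact_mod_cast hx1)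
    refine ⟨⌊x⌋, 1, 1, 0, ha, le_rfl, le_rfl, le_rfl, by omega, ?_⟩
    rw [iterate_one]
    nth_rw 1 [← floor_add_inv_cfShift x]
    push_cast
    field_simp
    ring
  | succ n ih =>
    obtain ⟨p, p', q, q', hp, hp', hq, hq', hlt, heq⟩ := ih
    set w := cfShift^[n + 1] x
    have hw : 1 < cfShift w := by
      rw [← iterate_succ_apply' cfShift]; exact one_lt_iterate_cfShift hx (n + 1)
    have ha : 1 ≤ ⌊w⌋ := Int.le_floor.2 (by exact_mod_cast (one_lt_iterate_cfShift hx n).le)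
    refine ⟨p * ⌊w⌋ + p', p, q * ⌊w⌋ + q', q, by nlinarith, hp, by nlinarith, by omega,
      by nlinarith, ?_⟩
    rw [iterate_succ_apply' cfShift (n + 1)]
    rw [← floor_add_inv_cfShift w] at heq
    have hw0 : cfShift w ≠ 0 := (zero_lt_one.trans hw).ne'
    push_cast
    field_simp at heq
    linear_combination heq

theorem exists_isReducedPair_of_mem_periodicPts {x : ℝ} (hx : Irrational x)
    (h : x ∈ periodicPts cfShift) : ∃ D x', IsReducedPair D x x' := by
  obtain ⟨k, hk, hper⟩ := h
  obtain ⟨n, rfl⟩ : ∃ n, k = n + 1 := ⟨k - 1, by omega⟩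
  have hfix : cfShift^[n + 1] x = x := hper
  have hx1 : 1 < x := hfix ▸ one_lt_iterate_cfShift hx n
  obtain ⟨p, p', q, q', hp, hp', hq, hq', hlt, heq⟩ := exists_mobius_iterate_cfShift hx hx1.le n
  rw [hfix] at heq
  refine ⟨_, _, isReducedPair_of_signs (A := q) (B := q' - p) (C := -p') (by omega) ?_ hx1
    (by omega) (by omega)⟩
  push_cast
  linear_combination heq

theorem IsReducedPair.cfShift_inv_sub_floor {D : ℤ} {y y' : ℝ} (h : IsReducedPair D y y')
    (hy : Int.fract y ≠ 0) : IsReducedPair D (cfShift y) (y' - ⌊y⌋)⁻¹ := by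
  obtain ⟨hy1, hy'1, hy'0, A, B, C, hA, hD, hB, hC⟩ := h
  set a := ⌊y⌋
  have ha : (1 : ℝ) ≤ a := by exact_mod_cast Int.le_floor.2 (by exact_mod_cast hy1.le)
  have hya : 0 < y - a := (Int.fract_nonneg y).lt_of_ne' hy
  have hy'a : y' - a < -1 := by linarith
  have hy'a0 : y' - a ≠ 0 := by linarith
  have hw : cfShift y = (y - a)⁻¹ := rfl
  -- the new quadratic is `-(A X² + B X + C)` at `X = a + 1/Z`, multiplied by `Z²`
  refine ⟨one_lt_cfShift hy, ?_, inv_lt_zero'.2 (by linarith),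
    -(A * a ^ 2 + B * a + C), -(2 * A * a + B), -A, ?_, by rw [← hD]; ring, ?_, ?_⟩
  · rw [neg_lt, ← inv_neg]
    exact inv_lt_one_of_one_lt₀ (by linarith)
  · have hA' : (0 : ℝ) < A := by exact_mod_cast hA
    have hay' : 0 < a - y' := by linarith
    have hA'' : ((-(A * a ^ 2 + B * a + C) : ℤ) : ℝ) = A * (y - a) * (a - y') := by
      push_cast
      rw [hB, hC]
      ring
    rw [← Int.cast_pos (R := ℝ), hA'']
    positivity
  all_goals
    rw [hw]
    push_cast
    rw [hB, hC]
    field_simp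
    ring

theorem IsReducedPair.right_unique {D E : ℤ} {y y₁ y₂ : ℝ} (hy : Irrational y)
    (h₁ : IsReducedPair D y y₁) (h₂ : IsReducedPair E y y₂) : y₁ = y₂ := by
  obtain ⟨-, -, -, A₁, B₁, C₁, hA₁, -, hB₁, hC₁⟩ := h₁
  obtain ⟨-, -, -, A₂, B₂, C₂, hA₂, -, hB₂, hC₂⟩ := h₂
  -- `y` is a root of the linear polynomial `A₂ (A₁ X² + B₁ X + C₁) - A₁ (A₂ X² + B₂ X + C₂)`
  have hlin : ((A₁ * B₂ - A₂ * B₁ : ℤ) : ℝ) * y = (A₂ * C₁ - A₁ * C₂ : ℤ) := by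
    push_cast
    rw [hB₁, hB₂, hC₁, hC₂]
    ring
  have hB : A₁ * B₂ - A₂ * B₁ = 0 := by
    by_contra hne
    exact Int.not_irrational _ (hlin ▸ hy.intCast_mul hne)
  have hB' : (A₁ * A₂ : ℝ) * (y₁ - y₂) = 0 := by
    have := congrArg (Int.cast : ℤ → ℝ) hB
    push_cast at this
    rw [hB₁, hB₂] at this
    linear_combination this
  have hA : (A₁ * A₂ : ℝ) ≠ 0 := by positivity
  exact sub_eq_zero.1 ((mul_eq_zero.1 hB').resolve_left hA)

theorem IsReducedPair.eq_of_cfShift_eq {D E : ℤ} {y y' z z' : ℝ} (hy : IsReducedPair D y y')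
    (hz : IsReducedPair E z z') (hyi : Irrational y) (hzi : Irrational z)
    (h : cfShift y = cfShift z) : y = z := by
  -- `cfShift y` determines its conjugate `(y' - ⌊y⌋)⁻¹`, which determines `⌊y⌋` as `y' ∈ (-1, 0)`
  have hconj : y' - ⌊y⌋ = z' - ⌊z⌋ := inv_injective <|
    (hy.cfShift_inv_sub_floor hyi.fract_ne_zero).right_unique (irrational_cfShift hyi)
      (h ▸ hz.cfShift_inv_sub_floor hzi.fract_ne_zero)
  have hfloor : ⌊y⌋ = ⌊z⌋ := by
    obtain ⟨-, hy'1, hy'0, -⟩ := hy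
    obtain ⟨-, hz'1, hz'0, -⟩ := hz
    have h1 : ((⌊y⌋ - ⌊z⌋ : ℤ) : ℝ) < 1 := by push_cast; linarith
    have h2 : ((⌊z⌋ - ⌊y⌋ : ℤ) : ℝ) < 1 := by push_cast; linarith
    have h1' : ⌊y⌋ - ⌊z⌋ < 1 := by exact_mod_cast h1
    have h2' : ⌊z⌋ - ⌊y⌋ < 1 := by exact_mod_cast h2
    omega
  rw [← floor_add_inv_cfShift y, ← floor_add_inv_cfShift z, h, hfloor]

theorem finite_setOf_isReducedPair (D : ℤ) : {y : ℝ | ∃ y', IsReducedPair D y y'}.Finite := by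
  refine (((Set.finite_Icc 1 D).prod (Set.finite_Icc (-D) D)).image
    fun p : ℤ × ℤ => (√D - p.2) / (2 * p.1)).subset ?_
  rintro y ⟨y', hy, -, hy', A, B, C, hA, hD, hB, hC⟩
  have hA' : (0 : ℝ) < A := by exact_mod_cast hA
  have hDA : (D : ℝ) = (A * (y - y')) ^ 2 := by
    rw [← hD]
    push_cast
    rw [hB, hC]
    ring
  -- `1 < y - y'` and `|y + y'| < y - y'` give `A² < D` and `B² < D`; and `y = (√D - B) / 2A`
  have hAD : ((A ^ 2 : ℤ) : ℝ) < D := by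
    rw [hDA, mul_pow]
    push_cast
    exact lt_mul_of_one_lt_right (by positivity) (one_lt_pow₀ (by linarith) two_ne_zero)
  have hBD : ((B ^ 2 : ℤ) : ℝ) < D := by
    rw [hDA]
    push_cast
    rw [hB, neg_mul, neg_sq, mul_pow, mul_pow]
    exact mul_lt_mul_of_pos_left (by nlinarith) (by positivity)
  have hAD' : A ^ 2 < D := by exact_mod_cast hAD
  have hBD' : B ^ 2 < D := by exact_mod_cast hBD
  refine ⟨(A, B), ⟨⟨by omega, by nlinarith⟩, by nlinarith, by nlinarith⟩, ?_⟩
  dsimp only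
  rw [hDA, Real.sqrt_sq (by nlinarith), hB]
  field_simp
  ring

theorem Function.mem_periodicPts_of_injOn {α : Type*} {f : α → α} {s : Set α} {x : α}
    (hs : s.Finite) (hf : Set.MapsTo f s s) (hinj : Set.InjOn f s) (hx : x ∈ s) :
    x ∈ periodicPts f := by
  have := hs.to_subtype
  obtain ⟨k, hk, hper⟩ := (hf.restrict_inj.2 hinj).mem_periodicPts ⟨x, hx⟩
  refine mk_mem_periodicPts hk (show f^[k] x = x from ?_)
  rw [← hf.coe_iterate_restrict ⟨x, hx⟩ k]
  exact congrArg Subtype.val hper.eq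

theorem IsReducedPair.mem_periodicPts {D : ℤ} {x x' : ℝ} (hx : Irrational x)
    (h : IsReducedPair D x x') : x ∈ periodicPts cfShift := by
  refine mem_periodicPts_of_injOn (s := {y | Irrational y ∧ ∃ y', IsReducedPair D y y'})
    ((finite_setOf_isReducedPair D).subset fun y hy => hy.2) ?_ ?_ ⟨hx, x', h⟩
  · rintro y ⟨hy, y', hyy'⟩
    exact ⟨irrational_cfShift hy, _, hyy'.cfShift_inv_sub_floor hy.fract_ne_zero⟩
  · rintro y ⟨hy, y', hyy'⟩ z ⟨hz, z', hzz'⟩ hyz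
    exact hyy'.eq_of_cfShift_eq hzz' hy hz hyz

/-- Galois's theorem: an irrational real number `x` has a purely periodic regular
continued fraction expansion iff `x` is a reduced quadratic irrational, i.e. `x > 1`
satisfies a quadratic `A x² + B x + C = 0` (`A, B, C ∈ ℤ`, `A ≠ 0`) whose other root
`x' = -B/A - x` lies in `(-1, 0)`. -/
theorem galois_purely_periodic_iff_reduced (x : ℝ) (hx : Irrational x) :
    (∃ k : ℕ, 1 ≤ k ∧ ∀ n : ℕ, cfA x (n + k) = cfA x n) ↔
      (1 < x ∧ ∃ A B C : ℤ, A ≠ 0 ∧ (A : ℝ) * x ^ 2 + (B : ℝ) * x + (C : ℝ) = 0 ∧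
        -1 < -(B : ℝ) / (A : ℝ) - x ∧ -(B : ℝ) / (A : ℝ) - x < 0) := by
  rw [cfA_purelyPeriodic_iff_mem_periodicPts hx, ← exists_isReducedPair_iff]
  exact ⟨exists_isReducedPair_of_mem_periodicPts hx,
    fun ⟨_, _, h⟩ => IsReducedPair.mem_periodicPts hx h⟩
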